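/- arXiv:2101.00996 — 4 statements merged into one kernel-verified Lean document; each statement's English description precedes it below -/
import Mathlib

section
/- Let N, r ≥ 1 be integers, let ζ be a hermitian N×N complex matrix and Q an N×r complex matrix with QᴴQ positive definite. For every t ∈ ℝ, with h_t := Qᴴ exp(2tζ) Q, A_t := Qᴴ(2ζ)exp(2tζ)Q and B_t := Qᴴ(4ζ²)exp(2tζ)Q, the hermitian r×r matrix B_t − A_t · h_t⁻¹ · A_t is positive semidefinite. (This is the fibrewise subgeodesic property of Bergman 1-parameter subgroups, i.e. the content of Proposition 4.3 and Corollary 4.4: the second variation ∂_t(h_t⁻¹∂_t h_t) = h_t⁻¹B_t − h_t⁻¹A_th_t⁻¹A_t, paired with the positive definite hermitian form h_t, is a positive semidefinite hermitian form, so the Bergman 1-PS defines a subgeodesic in the space of hermitian metrics.) -/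
open Matrix
open scoped ComplexOrder

private lemma posDef_conj_of_ker {n m : ℕ} {A : Matrix (Fin n) (Fin n) ℂ}
    (hA : A.PosDef) (B : Matrix (Fin n) (Fin m) ℂ)
    (hB : ∀ x, B *ᵥ x = 0 → x = 0) : (Bᴴ * A * B).PosDef := by
  refine PosDef.of_dotProduct_mulVec_pos (isHermitian_conjTranspose_mul_mul B hA.1) fun x hx => ?_
  have hBx : B *ᵥ x ≠ 0 := fun H => hx (hB x H)
  simpa only [star_mulVec, dotProduct_mulVec, vecMul_vecMul] using hA.dotProduct_mulVec_pos hBx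

/-- Fibrewise subgeodesic property of Bergman 1-parameter subgroups
(Proposition 4.3 / Corollary 4.4): with `h_t = Qᴴ exp(2tζ) Q`, `A_t = Qᴴ (2ζ) exp(2tζ) Q`
and `B_t = Qᴴ (4ζ²) exp(2tζ) Q`, the hermitian matrix `B_t − A_t h_t⁻¹ A_t` is
positive semidefinite. -/
theorem bergman_subgeodesic (N r : ℕ) (hN : 1 ≤ N) (hr : 1 ≤ r)
    (ζ : Matrix (Fin N) (Fin N) ℂ) (hζ : ζ.IsHermitian)
    (Q : Matrix (Fin N) (Fin r) ℂ) (hQ : (Qᴴ * Q).PosDef) (t : ℝ)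
    (h A B : Matrix (Fin r) (Fin r) ℂ)
    (hh : h = Qᴴ * NormedSpace.exp (((2 * t : ℝ) : ℂ) • ζ) * Q)
    (hA : A = Qᴴ * ((2 : ℂ) • ζ) * NormedSpace.exp (((2 * t : ℝ) : ℂ) • ζ) * Q)
    (hB : B = Qᴴ * ((4 : ℂ) • (ζ * ζ)) * NormedSpace.exp (((2 * t : ℝ) : ℂ) • ζ) * Q) :
    (B - A * h⁻¹ * A).PosSemidef := by
  set E : Matrix (Fin N) (Fin N) ℂ := NormedSpace.exp (((t : ℝ) : ℂ) • ζ) with hE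
  -- E is hermitian
  have htζ : (((t : ℝ) : ℂ) • ζ).IsHermitian := by
    unfold Matrix.IsHermitian
    rw [conjTranspose_smul, hζ.eq]
    congr 1
    simp
  have hEherm : Eᴴ = E := htζ.exp
  -- ζ commutes with E
  have hcomm : ζ * E = E * ζ := by
    have : Commute ζ (((t : ℝ) : ℂ) • ζ) := (Commute.refl ζ).smul_right _
    exact (this.exp_right).eq
  -- exp(2tζ) = E * E
  have hexp2 : NormedSpace.exp (((2 * t : ℝ) : ℂ) • ζ) = E * E := by
    have hsum : (((2 * t : ℝ) : ℂ)) • ζ = ((t : ℝ) : ℂ) • ζ + ((t : ℝ) : ℂ) • ζ := by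
      rw [← add_smul]
      congr 1
      push_cast
      ring
    rw [hsum]
    exact Matrix.exp_add_of_commute _ _ (Commute.refl _)
  set P : Matrix (Fin N) (Fin r) ℂ := E * Q with hP
  set Z : Matrix (Fin N) (Fin N) ℂ := (2 : ℂ) • ζ with hZ
  have hZherm : Zᴴ = Z := by
    rw [hZ, conjTranspose_smul, hζ.eq]
    norm_num
  have hZcomm : Z * E = E * Z := by
    rw [hZ, Matrix.smul_mul, Matrix.mul_smul, hcomm]
  -- rewrite h, A, B in terms of P and Z
  have hh' : h = Pᴴ * P := by
    rw [hh, hexp2, hP, conjTranspose_mul, hEherm]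
    simp only [Matrix.mul_assoc]
  have hA' : A = Pᴴ * Z * P := by
    rw [hA, hexp2, hP, conjTranspose_mul, hEherm]
    calc Qᴴ * Z * (E * E) * Q = Qᴴ * (Z * E) * (E * Q) := by simp only [Matrix.mul_assoc]
    _ = Qᴴ * (E * Z) * (E * Q) := by rw [hZcomm]
    _ = Qᴴ * E * Z * (E * Q) := by simp only [Matrix.mul_assoc]
  have hB' : B = Pᴴ * (Z * Z) * P := by
    have h4 : (4 : ℂ) • (ζ * ζ) = Z * Z := by
      rw [hZ, Matrix.smul_mul, Matrix.mul_smul, smul_smul]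
      norm_num
    rw [hB, hexp2, hP, h4, conjTranspose_mul, hEherm]
    calc Qᴴ * (Z * Z) * (E * E) * Q = Qᴴ * Z * (Z * E) * (E * Q) := by
          simp only [Matrix.mul_assoc]
    _ = Qᴴ * Z * (E * Z) * (E * Q) := by rw [hZcomm]
    _ = Qᴴ * (Z * E) * (Z * (E * Q)) := by simp only [Matrix.mul_assoc]
    _ = Qᴴ * (E * Z) * (Z * (E * Q)) := by rw [hZcomm]
    _ = Qᴴ * E * (Z * Z) * (E * Q) := by simp only [Matrix.mul_assoc]
  -- kernels are trivial
  have hQker : ∀ x, Q *ᵥ x = 0 → x = 0 := by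
    intro x hx
    by_contra hx0
    have hpos := hQ.dotProduct_mulVec_pos hx0
    have : star x ⬝ᵥ (Qᴴ * Q) *ᵥ x = 0 := by
      rw [← Matrix.mulVec_mulVec, hx, Matrix.mulVec_zero, dotProduct_zero]
    rw [this] at hpos
    exact lt_irrefl _ hpos
  have hEinj : Function.Injective E.mulVec :=
    Matrix.mulVec_injective_iff_isUnit.mpr (Matrix.isUnit_exp _)
  have hPker : ∀ x, P *ᵥ x = 0 → x = 0 := by
    intro x hx
    rw [hP, ← Matrix.mulVec_mulVec] at hx
    have : Q *ᵥ x = 0 := hEinj (by simpa using hx)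
    exact hQker x this
  -- h is positive definite
  have hhpd : h.PosDef := by
    have := posDef_conj_of_ker Matrix.PosDef.one P hPker
    rw [Matrix.mul_one] at this
    rwa [hh']
  have hinvmul : h⁻¹ * h = 1 :=
    Matrix.nonsing_inv_mul h ((Matrix.isUnit_iff_isUnit_det h).mp hhpd.isUnit)
  have hinvherm : h⁻¹ᴴ = h⁻¹ := hhpd.inv.isHermitian
  -- the projection 1 - P h⁻¹ Pᴴ is PSD
  set K : Matrix (Fin N) (Fin N) ℂ := P * h⁻¹ * Pᴴ with hK
  have hKherm : Kᴴ = K := by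
    rw [hK]
    simp [conjTranspose_mul, hinvherm, Matrix.mul_assoc]
  have hKK : K * K = K := by
    have h1 : Pᴴ * P = h := hh'.symm
    calc K * K = P * h⁻¹ * (Pᴴ * P) * h⁻¹ * Pᴴ := by
          rw [hK]; simp only [Matrix.mul_assoc]
    _ = P * (h⁻¹ * h) * h⁻¹ * Pᴴ := by rw [h1]; simp only [Matrix.mul_assoc]
    _ = P * h⁻¹ * Pᴴ := by rw [hinvmul, Matrix.mul_one]
    _ = K := hK.symm
  have hMpsd : (1 - K).PosSemidef := by
    have hMherm : (1 - K)ᴴ = 1 - K := by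
      rw [conjTranspose_sub, conjTranspose_one, hKherm]
    have hMM : (1 - K) * (1 - K) = 1 - K := by
      have : (1 - K) * (1 - K) = 1 - K - (K - K * K) := by noncomm_ring
      rw [hKK, sub_self, sub_zero] at this
      exact this
    have : 1 - K = (1 - K)ᴴ * (1 - K) := by rw [hMherm, hMM]
    rw [this]
    exact posSemidef_conjTranspose_mul_self (1 - K)
  -- the key algebraic identity
  have key : B - A * h⁻¹ * A = (Z * P)ᴴ * (1 - K) * (Z * P) := by
    have hZP : (Z * P)ᴴ = Pᴴ * Z := by rw [conjTranspose_mul Z P, hZherm]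
    rw [hA', hB', hK, hZP]
    simp only [Matrix.mul_sub, Matrix.sub_mul, Matrix.mul_one, Matrix.mul_assoc]
  rw [key]
  exact hMpsd.conjTranspose_mul_mul_same (Z * P)
end

section
/- Let N, r ≥ 1 be integers, let ζ be a hermitian N×N complex matrix and Q an N×r complex matrix with QᴴQ positive definite. For every t ∈ ℝ, with h_t := Qᴴ exp(2tζ) Q, A_t := Qᴴ(2ζ)exp(2tζ)Q and B_t := Qᴴ(4ζ²)exp(2tζ)Q, one has Re(trace(h_t⁻¹ · B_t − h_t⁻¹ · A_t · h_t⁻¹ · A_t)) ≥ 0; that is, the trace of the second variation ∂_t(h_{σ_t}⁻¹ ∂_t h_{σ_t}) of the Bergman 1-parameter subgroup is nonnegative. (This is the weak, trace form of Proposition 4.3 due to Phong–Sturm, recorded in Remark 4.4, which underlies the convexity of the balancing energy.) -/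
open Matrix
open scoped ComplexOrder

/-- Key abstract lemma (Phong–Sturm): for `P` with `Pᴴ P` positive definite and `M` hermitian,
the trace of `(PᴴP)⁻¹ Pᴴ M² P − (PᴴP)⁻¹ Pᴴ M P (PᴴP)⁻¹ Pᴴ M P` is nonnegative. -/
theorem bergman_key (N r : ℕ) (P : Matrix (Fin N) (Fin r) ℂ)
    (M : Matrix (Fin N) (Fin N) ℂ) (hM : Mᴴ = M) (hPD : (Pᴴ * P).PosDef) :
    0 ≤ (((Pᴴ * P)⁻¹ * (Pᴴ * (M * M) * P)
        - (Pᴴ * P)⁻¹ * (Pᴴ * M * P) * ((Pᴴ * P)⁻¹ * (Pᴴ * M * P))).trace).re := by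
  classical
  set g : Matrix (Fin r) (Fin r) ℂ := (Pᴴ * P)⁻¹ with hg
  have hgH : gᴴ = g := (isHermitian_conjTranspose_mul_self P).inv
  have hunit : IsUnit (Pᴴ * P) := hPD.isUnit
  have hdet : IsUnit (Pᴴ * P).det := (isUnit_iff_isUnit_det _).mp hunit
  have hginv : g * (Pᴴ * P) = 1 := nonsing_inv_mul _ hdet
  set Pi : Matrix (Fin N) (Fin N) ℂ := P * g * Pᴴ with hPi
  have hPiH : Piᴴ = Pi := by
    simp [hPi, conjTranspose_mul, hgH, Matrix.mul_assoc]
  have hginv' : (Pᴴ * P) * g = 1 := mul_nonsing_inv _ hdet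
  have hPi2 : Pi * Pi = Pi := by
    rw [hPi]
    calc P * g * Pᴴ * (P * g * Pᴴ) = P * (g * (Pᴴ * P) * (g * Pᴴ)) := by
          simp only [Matrix.mul_assoc]
      _ = P * g * Pᴴ := by rw [hginv, Matrix.one_mul, ← Matrix.mul_assoc]
  -- trace identities
  have tr1 : (g * (Pᴴ * (M * M) * P)).trace = (Pi * (M * M)).trace := by
    rw [show g * (Pᴴ * (M * M) * P) = (g * Pᴴ * (M * M)) * P by
      simp only [Matrix.mul_assoc]]
    rw [trace_mul_comm]
    congr 1
    simp only [hPi, Matrix.mul_assoc]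
  have tr2 : (g * (Pᴴ * M * P) * (g * (Pᴴ * M * P))).trace
      = (Pi * M * (Pi * M)).trace := by
    rw [show g * (Pᴴ * M * P) * (g * (Pᴴ * M * P))
        = (g * Pᴴ * M * (P * (g * (Pᴴ * M)))) * P by simp only [Matrix.mul_assoc]]
    rw [trace_mul_comm]
    congr 1
    simp only [hPi, Matrix.mul_assoc]
  set Y : Matrix (Fin N) (Fin N) ℂ := M * Pi - Pi * (M * Pi) with hY
  have hYH : Yᴴ = Pi * M - Pi * (M * Pi) := by
    simp [hY, conjTranspose_sub, conjTranspose_mul, hPiH, hM, Matrix.mul_assoc]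
  have expand : Yᴴ * Y = Pi * (M * (M * Pi)) - Pi * (M * (Pi * (M * Pi))) := by
    rw [hYH, hY]
    rw [sub_mul, mul_sub, mul_sub]
    have e1 : Pi * (M * Pi) * (M * Pi) = Pi * (M * (Pi * (M * Pi))) := by
      simp only [Matrix.mul_assoc]
    have e2 : Pi * M * (M * Pi) = Pi * (M * (M * Pi)) := by simp only [Matrix.mul_assoc]
    have e3 : Pi * M * (Pi * (M * Pi)) = Pi * (M * (Pi * (M * Pi))) := by
      simp only [Matrix.mul_assoc]
    have e4 : Pi * (M * Pi) * (Pi * (M * Pi)) = Pi * (M * (Pi * (M * Pi))) := by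
      calc Pi * (M * Pi) * (Pi * (M * Pi)) = Pi * M * (Pi * Pi) * (M * Pi) := by
            simp only [Matrix.mul_assoc]
        _ = Pi * (M * (Pi * (M * Pi))) := by rw [hPi2]; simp only [Matrix.mul_assoc]
    rw [e1, e2, e3, e4]
    abel
  -- traces with leading Pi absorb an extra Pi
  have tA : (Pi * (M * (M * Pi))).trace = (Pi * (M * M)).trace := by
    rw [show Pi * (M * (M * Pi)) = (Pi * (M * M)) * Pi by simp only [Matrix.mul_assoc],
      trace_mul_comm, show Pi * (Pi * (M * M)) = Pi * Pi * (M * M) by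
        simp only [Matrix.mul_assoc], hPi2]
  have tB : (Pi * (M * (Pi * (M * Pi)))).trace = (Pi * M * (Pi * M)).trace := by
    rw [show Pi * (M * (Pi * (M * Pi))) = (Pi * (M * (Pi * M))) * Pi by
      simp only [Matrix.mul_assoc], trace_mul_comm,
      show Pi * (Pi * (M * (Pi * M))) = Pi * Pi * (M * (Pi * M)) by
        simp only [Matrix.mul_assoc], hPi2]
    simp only [Matrix.mul_assoc]
  have key : ((Pᴴ * P)⁻¹ * (Pᴴ * (M * M) * P)
      - (Pᴴ * P)⁻¹ * (Pᴴ * M * P) * ((Pᴴ * P)⁻¹ * (Pᴴ * M * P))).trace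
      = (Yᴴ * Y).trace := by
    rw [trace_sub, expand, trace_sub, ← hg, tr1, ← Matrix.mul_assoc, tr2, tA, tB]
    simp only [Matrix.mul_assoc]
  have hps : (0 : ℂ) ≤ (Yᴴ * Y).trace := by
    rw [Matrix.trace]
    refine Finset.sum_nonneg fun i _ => ?_
    rw [Matrix.diag_apply, Matrix.mul_apply]
    refine Finset.sum_nonneg fun j _ => ?_
    simpa [Matrix.conjTranspose_apply] using star_mul_self_nonneg (Y j i)
  rw [key]
  exact (Complex.le_def.mp hps).1

/-- Weak (trace) form of the subgeodesic property (Remark 4.4, due to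
Phong–Sturm): with `h_t = Qᴴ exp(2tζ) Q`, `A_t = Qᴴ (2ζ) exp(2tζ) Q` and
`B_t = Qᴴ (4ζ²) exp(2tζ) Q`, the trace of the second variation
`∂ₜ(h_{σ_t}⁻¹ ∂ₜ h_{σ_t}) = h_t⁻¹ B_t − h_t⁻¹ A_t h_t⁻¹ A_t` is nonnegative. -/
theorem bergman_trace_second_variation_nonneg (N r : ℕ) (hN : 1 ≤ N) (hr : 1 ≤ r)
    (ζ : Matrix (Fin N) (Fin N) ℂ) (hζ : ζ.IsHermitian)
    (Q : Matrix (Fin N) (Fin r) ℂ) (hQ : (Qᴴ * Q).PosDef) (t : ℝ)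
    (h A B : Matrix (Fin r) (Fin r) ℂ)
    (hh : h = Qᴴ * NormedSpace.exp (((2 * t : ℝ) : ℂ) • ζ) * Q)
    (hA : A = Qᴴ * ((2 : ℂ) • ζ) * NormedSpace.exp (((2 * t : ℝ) : ℂ) • ζ) * Q)
    (hB : B = Qᴴ * ((4 : ℂ) • (ζ * ζ)) * NormedSpace.exp (((2 * t : ℝ) : ℂ) • ζ) * Q) :
    0 ≤ ((h⁻¹ * B - h⁻¹ * A * h⁻¹ * A).trace).re := by
  classical
  set E : Matrix (Fin N) (Fin N) ℂ := NormedSpace.exp ((t : ℂ) • ζ) with hE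
  have htζ : ((t : ℂ) • ζ).IsHermitian := by
    simp [Matrix.IsHermitian, conjTranspose_smul, Complex.star_def, Complex.conj_ofReal, hζ.eq]
  have hEH : Eᴴ = E := htζ.exp
  have hexp2 : NormedSpace.exp (((2 * t : ℝ) : ℂ) • ζ) = E * E := by
    have hsum : (((2 * t : ℝ) : ℂ)) • ζ = (t : ℂ) • ζ + (t : ℂ) • ζ := by
      rw [← add_smul]; push_cast; ring_nf
    rw [hsum, Matrix.exp_add_of_commute _ _ (Commute.refl _)]
  have hζE : Commute ζ E := ((Commute.refl ζ).smul_right ((t : ℂ))).exp_right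
  set M : Matrix (Fin N) (Fin N) ℂ := (2 : ℂ) • ζ with hM
  have hMH : Mᴴ = M := by
    simp [hM, conjTranspose_smul, hζ.eq]
  have hME : M * E = E * M := by
    simp only [hM, smul_mul_assoc, mul_smul_comm, hζE.eq]
  have hMM : M * M = (4 : ℂ) • (ζ * ζ) := by
    simp [hM, smul_mul_assoc, mul_smul_comm, smul_smul]; norm_num
  set P : Matrix (Fin N) (Fin r) ℂ := E * Q with hP
  have hhP : h = Pᴴ * P := by
    rw [hh, hexp2, hP]
    simp only [conjTranspose_mul, hEH, Matrix.mul_assoc]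
  have hAP : A = Pᴴ * M * P := by
    rw [hA, hexp2, hP]
    simp only [conjTranspose_mul, hEH, Matrix.mul_assoc]
    rw [← Matrix.mul_assoc E M (E * Q), ← hME, Matrix.mul_assoc]
  have hBP : B = Pᴴ * (M * M) * P := by
    rw [hB, hexp2, hP, hMM]
    simp only [conjTranspose_mul, hEH, Matrix.mul_assoc]
    rw [← Matrix.mul_assoc E ((4:ℂ) • (ζ*ζ)) (E * Q)]
    have : E * ((4:ℂ) • (ζ*ζ)) = ((4:ℂ) • (ζ*ζ)) * E :=
      (((hζE.mul_left hζE).smul_left (4:ℂ)).symm).eq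
    rw [this, Matrix.mul_assoc]
  have hPD : (Pᴴ * P).PosDef := by
    refine PosDef.of_dotProduct_mulVec_pos (isHermitian_conjTranspose_mul_self P) fun x hx => ?_
    have hPx : P *ᵥ x ≠ 0 := by
      have hQx : Q *ᵥ x ≠ 0 := by
        intro h0
        have := hQ.dotProduct_mulVec_pos hx
        rw [← mulVec_mulVec, h0, mulVec_zero, dotProduct_zero] at this
        exact lt_irrefl _ this
      have hinj : Function.Injective (E.mulVec) :=
        mulVec_injective_iff_isUnit.mpr (Matrix.isUnit_exp _)
      intro h0
      rw [hP, ← mulVec_mulVec] at h0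
      exact hQx (hinj (h0.trans (mulVec_zero E).symm))
    rw [← mulVec_mulVec, dotProduct_mulVec, vecMul_conjTranspose, star_star]
    exact dotProduct_star_self_pos_iff.mpr hPx
  rw [hhP, hAP, hBP]
  have := bergman_key N r P M hMH hPD
  rw [← Matrix.mul_assoc ((Pᴴ*P)⁻¹ * (Pᴴ * M * P)) ((Pᴴ*P)⁻¹) (Pᴴ * M * P)] at this
  exact this
end

section
/- Let N, r ≥ 1 be integers, let ζ be a hermitian N×N complex matrix and Q an N×r complex matrix with QᴴQ positive definite. Then the function f : ℝ → ℝ defined by f(t) := log(Re(det(Qᴴ · exp(2tζ) · Q))) is convex on ℝ. (Here the determinant is a positive real number since Qᴴ exp(2tζ) Q is positive definite. This is the fibrewise content of Lemma 5.5: the functional M₂^{Don}(σ_t) = (1/Vol)∫ log det(h_{σ_t} h_ref⁻¹) dV is convex along every Bergman 1-parameter subgroup σ_t = e^{tζ}, so any critical point of M₂^{Don} is a global minimum.) -/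
open Matrix Finset
open scoped ComplexOrder


open Finset

theorem rpow_exp (x a : ℝ) : Real.exp x ^ a = Real.exp (a * x) := by
  rw [← Real.exp_mul, mul_comm]

/-- Log-sum-exp convexity. -/
theorem convexOn_log_sum_exp {ι : Type*} [Fintype ι] (c μ : ι → ℝ)
    (hc : ∀ i, 0 ≤ c i) (hpos : ∀ t : ℝ, 0 < ∑ i, c i * Real.exp (t * μ i)) :
    ConvexOn ℝ Set.univ (fun t : ℝ => Real.log (∑ i, c i * Real.exp (t * μ i))) := by
  set S : ℝ → ℝ := fun t => ∑ i, c i * Real.exp (t * μ i) with hS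
  refine ⟨convex_univ, ?_⟩
  intro x _ y _ a b ha hb hab
  rcases eq_or_lt_of_le ha with ha0 | ha
  · simp [← ha0, show b = 1 by linarith]
  rcases eq_or_lt_of_le hb with hb0 | hb
  · simp [← hb0, show a = 1 by linarith]
  -- Hölder with p = 1/a, q = 1/b
  have hpq : (1/a).HolderConjugate (1/b) := by
    constructor
    · simpa [one_div] using hab
    · positivity
    · positivity
  have key : S (a * x + b * y) ≤ S x ^ a * S y ^ b := by
    have hnn : ∀ (u : ℝ) (i : ι), 0 ≤ c i * Real.exp (u * μ i) :=
      fun u i => mul_nonneg (hc i) (Real.exp_pos _).le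
    have H := Real.inner_le_Lp_mul_Lq_of_nonneg (s := (univ : Finset ι))
      hpq (f := fun i => (c i * Real.exp (x * μ i)) ^ a)
      (g := fun i => (c i * Real.exp (y * μ i)) ^ b)
      (fun i _ => Real.rpow_nonneg (hnn x i) _)
      (fun i _ => Real.rpow_nonneg (hnn y i) _)
    have e1 : ∀ i, (c i * Real.exp (x * μ i)) ^ a * (c i * Real.exp (y * μ i)) ^ b
        = c i * Real.exp ((a * x + b * y) * μ i) := by
      intro i
      rw [Real.mul_rpow (hc i) (Real.exp_pos _).le, Real.mul_rpow (hc i) (Real.exp_pos _).le,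
        rpow_exp, rpow_exp, mul_mul_mul_comm, ← Real.rpow_add' (hc i) (by rw [hab]; norm_num),
        hab, Real.rpow_one, ← Real.exp_add]
      ring_nf
    have e2 : ∀ (u z : ℝ), 0 < z → ∀ i, ((c i * Real.exp (u * μ i)) ^ z) ^ (1/z)
        = c i * Real.exp (u * μ i) := by
      intro u z hz i
      rw [← Real.rpow_mul (hnn u i), mul_one_div_cancel hz.ne', Real.rpow_one]
    simp only [e1, e2 x a ha, e2 y b hb, one_div_one_div] at H
    exact H
  have hsx := hpos x
  have hsy := hpos y
  calc Real.log (S (a * x + b * y)) ≤ Real.log (S x ^ a * S y ^ b) :=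
        Real.log_le_log (hpos _) key
    _ = a * Real.log (S x) + b * Real.log (S y) := by
        rw [Real.log_mul (by positivity) (by positivity),
          Real.log_rpow hsx, Real.log_rpow hsy]


open Matrix Finset

variable {N r : ℕ}

noncomputable def mino (M : Matrix (Fin N) (Fin r) ℂ) (w : Fin r → Fin N) : ℂ :=
  (M.submatrix w id).det

theorem detB (M : Matrix (Fin N) (Fin r) ℂ) (w : Fin r → Fin N) :
    ∑ σ : Equiv.Perm (Fin r), ((Equiv.Perm.sign σ : ℤ) : ℂ) * ∏ j, M (w j) (σ j)
      = mino M w := by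
  rw [mino, ← Matrix.det_transpose, Matrix.det_apply']
  simp [Matrix.transpose_apply, Matrix.submatrix_apply]

theorem step1 (M : Matrix (Fin N) (Fin r) ℂ) (d : Fin N → ℂ) :
    (Mᴴ * diagonal d * M).det
      = ∑ w : Fin r → Fin N, (∏ j, d (w j)) * ((∏ j, M (w j) j) * star (mino M w)) := by
  have entry : ∀ p q, (Mᴴ * diagonal d * M) p q = ∑ i, star (M i p) * d i * M i q := by
    intro p q
    rw [Matrix.mul_assoc, Matrix.mul_apply]
    refine Finset.sum_congr rfl fun i _ => ?_
    rw [Matrix.diagonal_mul, Matrix.conjTranspose_apply, mul_assoc]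
  rw [Matrix.det_apply']
  simp only [entry]
  have expand : ∀ σ : Equiv.Perm (Fin r),
      (∏ j, ∑ i, star (M i (σ j)) * d i * M i j)
        = ∑ w : Fin r → Fin N, ∏ j, star (M (w j) (σ j)) * d (w j) * M (w j) j := by
    intro σ
    rw [Finset.prod_univ_sum]
    rw [Fintype.piFinset_univ]
  simp only [expand, Finset.mul_sum]
  rw [Finset.sum_comm]
  refine Finset.sum_congr rfl fun w _ => ?_
  rw [← detB M w, star_sum, Finset.mul_sum, Finset.mul_sum]
  refine Finset.sum_congr rfl fun σ _ => ?_
  rw [star_mul', star_prod]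
  simp only [star_intCast]
  rw [Finset.prod_mul_distrib, Finset.prod_mul_distrib]
  push_cast
  ring

theorem step2 (M : Matrix (Fin N) (Fin r) ℂ) (d : Fin N → ℂ) (w : Fin r → Fin N) :
    ∑ π : Equiv.Perm (Fin r),
        (∏ j, d (w (π j))) * ((∏ j, M (w (π j)) j) * star (mino M (w ∘ π)))
      = (∏ j, d (w j)) * (mino M w * star (mino M w)) := by
  have h1 : ∀ π : Equiv.Perm (Fin r), (∏ j, d (w (π j))) = ∏ j, d (w j) :=
    fun π => Equiv.prod_comp π (fun j => d (w j))
  have h2 : ∀ π : Equiv.Perm (Fin r),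
      mino M (w ∘ π) = ((Equiv.Perm.sign π : ℤ) : ℂ) * mino M w := by
    intro π
    have : M.submatrix (w ∘ π) id = (M.submatrix w id).submatrix π id := by
      ext i j; simp
    rw [mino, this, Matrix.det_permute]
    rfl
  simp only [h1, h2, star_mul', star_intCast]
  have h3 : ∑ π : Equiv.Perm (Fin r),
      ((Equiv.Perm.sign π : ℤ) : ℂ) * ∏ j, M (w (π j)) j = mino M w := by
    rw [mino, Matrix.det_apply']
    refine Finset.sum_congr rfl fun π _ => ?_
    simp [Matrix.submatrix_apply]
  set sm := star (mino M w) with hsm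
  conv_rhs => rw [← h3]
  rw [Finset.sum_mul, Finset.mul_sum]
  refine Finset.sum_congr rfl fun π _ => ?_
  ring

theorem cauchy_binet (M : Matrix (Fin N) (Fin r) ℂ) (d : Fin N → ℂ) :
    (r.factorial : ℂ) * (Mᴴ * diagonal d * M).det
      = ∑ w : Fin r → Fin N, (∏ j, d (w j)) * (mino M w * star (mino M w)) := by
  have card : (Fintype.card (Equiv.Perm (Fin r)) : ℂ) = (r.factorial : ℂ) := by
    rw [Fintype.card_perm, Fintype.card_fin]
  rw [← card, step1]
  have reindex : ∀ π : Equiv.Perm (Fin r),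
      (∑ w : Fin r → Fin N, (∏ j, d (w j)) * ((∏ j, M (w j) j) * star (mino M w)))
        = ∑ w : Fin r → Fin N,
            (∏ j, d (w (π j))) * ((∏ j, M (w (π j)) j) * star (mino M (w ∘ π))) := by
    intro π
    refine Fintype.sum_equiv (Equiv.arrowCongr π (Equiv.refl (Fin N))) _ _ fun w => ?_
    have hwπ : ∀ j, (Equiv.arrowCongr π (Equiv.refl (Fin N))) w (π j) = w j := by
      intro j; simp
    have hc : ((Equiv.arrowCongr π (Equiv.refl (Fin N))) w) ∘ π = w := by
      funext j; exact hwπ j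
    simp only [hwπ, hc]
  calc ((Fintype.card (Equiv.Perm (Fin r)) : ℂ)) *
        ∑ w : Fin r → Fin N, (∏ j, d (w j)) * ((∏ j, M (w j) j) * star (mino M w))
      = ∑ _π : Equiv.Perm (Fin r),
          ∑ w : Fin r → Fin N, (∏ j, d (w j)) * ((∏ j, M (w j) j) * star (mino M w)) := by
        rw [Finset.sum_const, nsmul_eq_mul, Finset.card_univ]
    _ = ∑ π : Equiv.Perm (Fin r), ∑ w : Fin r → Fin N,
          (∏ j, d (w (π j))) * ((∏ j, M (w (π j)) j) * star (mino M (w ∘ π))) :=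
        Finset.sum_congr rfl fun π _ => reindex π
    _ = ∑ w : Fin r → Fin N, ∑ π : Equiv.Perm (Fin r),
          (∏ j, d (w (π j))) * ((∏ j, M (w (π j)) j) * star (mino M (w ∘ π))) :=
        Finset.sum_comm
    _ = ∑ w : Fin r → Fin N, (∏ j, d (w j)) * (mino M w * star (mino M w)) :=
        Finset.sum_congr rfl fun w _ => step2 M d w

theorem bergman_aux (N r : ℕ) (hN : 1 ≤ N) (hr : 1 ≤ r)
    (ζ : Matrix (Fin N) (Fin N) ℂ) (hζ : ζ.IsHermitian)
    (Q : Matrix (Fin N) (Fin r) ℂ) (hQ : (Qᴴ * Q).PosDef) :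
    ConvexOn ℝ Set.univ
      (fun t : ℝ => Real.log ((Qᴴ * NormedSpace.exp (((2 * t : ℝ) : ℂ) • ζ) * Q).det.re)) := by
  classical
  set U : Matrix (Fin N) (Fin N) ℂ := (hζ.eigenvectorUnitary : Matrix (Fin N) (Fin N) ℂ) with hU
  set lam : Fin N → ℝ := hζ.eigenvalues with hlam
  have hUU : U * star U = 1 := (Matrix.mem_unitaryGroup_iff).mp hζ.eigenvectorUnitary.2
  have hUU' : star U * U = 1 := (Matrix.mem_unitaryGroup_iff').mp hζ.eigenvectorUnitary.2
  have hUunit : IsUnit U := ⟨⟨U, star U, hUU, hUU'⟩, rfl⟩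
  have hUinv : U⁻¹ = star U := Matrix.inv_eq_right_inv hUU
  set M : Matrix (Fin N) (Fin r) ℂ := star U * Q with hM
  have hMH : Mᴴ = Qᴴ * U := by
    rw [hM, Matrix.conjTranspose_mul, Matrix.star_eq_conjTranspose,
      Matrix.conjTranspose_conjTranspose]
  set c : (Fin r → Fin N) → ℝ := fun w => Complex.normSq (mino M w) with hc
  set mu : (Fin r → Fin N) → ℝ := fun w => ∑ j, 2 * lam (w j) with hmu
  have hfac : (0 : ℝ) < (r.factorial : ℝ) := by positivity
  -- the key pointwise identity
  have keyEq : ∀ t : ℝ, (Qᴴ * NormedSpace.exp (((2 * t : ℝ) : ℂ) • ζ) * Q).det.re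
      = (∑ w : Fin r → Fin N, c w * Real.exp (t * mu w)) / (r.factorial : ℝ) := by
    intro t
    have e1 : ((2 * t : ℝ) : ℂ) • ζ
        = U * diagonal (fun i => ((2 * t * lam i : ℝ) : ℂ)) * star U := by
      conv_lhs => rw [hζ.spectral_theorem, Unitary.conjStarAlgAut_apply]
      rw [← smul_mul_assoc, ← mul_smul_comm, ← Matrix.diagonal_smul]
      have harg : (((2 * t : ℝ) : ℂ) • (RCLike.ofReal ∘ hζ.eigenvalues) : Fin N → ℂ)
          = fun i => ((2 * t * lam i : ℝ) : ℂ) := by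
        funext i
        simp only [Pi.smul_apply, Function.comp_apply, smul_eq_mul, ← hlam]
        rw [show (RCLike.ofReal (lam i) : ℂ) = ((lam i : ℝ) : ℂ) from rfl]
        push_cast
        ring
      rw [harg]
    have e2 : NormedSpace.exp (((2 * t : ℝ) : ℂ) • ζ)
        = U * diagonal (fun i => Complex.exp ((2 * t * lam i : ℝ) : ℂ)) * star U := by
      rw [e1, ← hUinv, Matrix.exp_conj U _ hUunit, Matrix.exp_diagonal, hUinv,
        show (NormedSpace.exp fun i => ((2 * t * lam i : ℝ) : ℂ))
            = (fun i => Complex.exp ((2 * t * lam i : ℝ) : ℂ)) from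
          funext fun i => by rw [Pi.coe_exp, Complex.exp_eq_exp_ℂ]]
    have e3 : Qᴴ * NormedSpace.exp (((2 * t : ℝ) : ℂ) • ζ) * Q
        = Mᴴ * diagonal (fun i => Complex.exp ((2 * t * lam i : ℝ) : ℂ)) * M := by
      rw [e2, hMH, hM]
      simp only [Matrix.mul_assoc]
    rw [e3]
    have cb := cauchy_binet M (fun i => Complex.exp ((2 * t * lam i : ℝ) : ℂ))
    have prodExp : ∀ w : Fin r → Fin N,
        (∏ j, Complex.exp ((2 * t * lam (w j) : ℝ) : ℂ))
          = ((Real.exp (t * mu w) : ℝ) : ℂ) := by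
      intro w
      have h4 : ∀ j : Fin r, Complex.exp ((2 * t * lam (w j) : ℝ) : ℂ)
          = ((Real.exp (2 * t * lam (w j)) : ℝ) : ℂ) := fun j => (Complex.ofReal_exp _).symm
      simp only [h4, ← Complex.ofReal_prod, ← Real.exp_sum]
      congr 2
      rw [hmu, Finset.mul_sum]
      congr 1; funext j; ring
    have msq : ∀ w : Fin r → Fin N, mino M w * star (mino M w)
        = ((Complex.normSq (mino M w) : ℝ) : ℂ) := fun w => Complex.mul_conj _
    simp only [prodExp, msq] at cb
    have cb' : ((r.factorial : ℝ) : ℂ)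
          * (Mᴴ * diagonal (fun i => Complex.exp ((2 * t * lam i : ℝ) : ℂ)) * M).det
        = ((∑ w : Fin r → Fin N, c w * Real.exp (t * mu w) : ℝ) : ℂ) := by
      rw [Complex.ofReal_natCast, cb, Complex.ofReal_sum]
      refine Finset.sum_congr rfl fun w _ => ?_
      rw [Complex.ofReal_mul, hc]
      ring
    have := congrArg Complex.re cb'
    rw [Complex.re_ofReal_mul, Complex.ofReal_re] at this
    rw [eq_div_iff hfac.ne']
    linarith [this]
  -- positivity of the coefficients
  have hdet0 : 0 < (Qᴴ * Q).det.re := by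
    have h := hQ.det_pos
    have := (Complex.lt_def.mp h).1
    simpa using this
  have hsum : 0 < ∑ w : Fin r → Fin N, c w := by
    have k0 := keyEq 0
    have hz : ((2 * (0:ℝ) : ℝ) : ℂ) • ζ = 0 := by norm_num
    rw [hz, NormedSpace.exp_zero, Matrix.mul_one] at k0
    have : (0:ℝ) < (∑ w : Fin r → Fin N, c w * Real.exp (0 * mu w)) / (r.factorial : ℝ) := by
      rw [← k0]; exact hdet0
    have h2 : (0:ℝ) < ∑ w : Fin r → Fin N, c w * Real.exp (0 * mu w) := by
      by_contra hle
      push_neg at hle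
      nlinarith [div_nonpos_of_nonpos_of_nonneg hle hfac.le]
    simpa using h2
  obtain ⟨w0, -, hw0⟩ := Finset.exists_lt_of_sum_lt (by simpa using hsum :
    ∑ w : Fin r → Fin N, (0:ℝ) < ∑ w : Fin r → Fin N, c w)
  have hpos : ∀ t : ℝ, 0 < ∑ w : Fin r → Fin N, c w * Real.exp (t * mu w) := by
    intro t
    refine Finset.sum_pos' (fun w _ => mul_nonneg (Complex.normSq_nonneg _) (Real.exp_pos _).le)
      ⟨w0, Finset.mem_univ _, mul_pos hw0 (Real.exp_pos _)⟩
  have feq : (fun t : ℝ => Real.log ((Qᴴ * NormedSpace.exp (((2 * t : ℝ) : ℂ) • ζ) * Q).det.re))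
      = fun t : ℝ => Real.log (∑ w : Fin r → Fin N, c w * Real.exp (t * mu w))
          + (- Real.log (r.factorial : ℝ)) := by
    funext t
    rw [keyEq t, Real.log_div (hpos t).ne' hfac.ne']
    ring
  rw [feq]
  exact (convexOn_log_sum_exp c mu (fun w => Complex.normSq_nonneg _) hpos).add
    (convexOn_const _ convex_univ)


/-- Fibrewise content of Lemma 5.5: the function
`t ↦ log (det (Qᴴ exp(2tζ) Q))` is convex on `ℝ` (the determinant being a positive real
number since `h_t = Qᴴ exp(2tζ) Q` is positive definite), so the functional `M₂^{Don}` is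
convex along every Bergman 1-parameter subgroup. -/
theorem bergman_logdet_convex (N r : ℕ) (hN : 1 ≤ N) (hr : 1 ≤ r)
    (ζ : Matrix (Fin N) (Fin N) ℂ) (hζ : ζ.IsHermitian)
    (Q : Matrix (Fin N) (Fin r) ℂ) (hQ : (Qᴴ * Q).PosDef) :
    ConvexOn ℝ Set.univ
      (fun t : ℝ => Real.log ((Qᴴ * NormedSpace.exp (((2 * t : ℝ) : ℂ) • ζ) * Q).det.re)) :=
  bergman_aux N r hN hr ζ hζ Q hQ
end

section
/- Let E be a finite-dimensional real normed vector space and let f : E → ℝ be a continuous function such that for every ζ ∈ E the function t ↦ f(t·ζ) is convex on ℝ, and such that for every ζ ≠ 0 there exists t > 0 with f(t·ζ) > f(0) (equivalently, the asymptotic slope sup_{t>0} (f(tζ) − f(0))/t is positive along every nonzero direction). Then f is coercive (f(x) → +∞ as ‖x‖ → +∞) and attains a global minimum: there exists x₀ ∈ E with f(x₀) ≤ f(x) for all x ∈ E. -/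
/-- Slope inequality along a ray for a ray-convex function. -/
lemma ray_slope {E : Type*} [AddCommGroup E] [Module ℝ E] (f : E → ℝ)
    (hconv : ∀ ζ : E, ConvexOn ℝ Set.univ fun t : ℝ => f (t • ζ))
    (ζ : E) {t s : ℝ} (ht : 0 < t) (hts : t ≤ s) :
    f 0 + (s / t) * (f (t • ζ) - f 0) ≤ f (s • ζ) := by
  have hs : 0 < s := lt_of_lt_of_le ht hts
  have ha : (0:ℝ) ≤ 1 - t/s := by
    have : t/s ≤ 1 := (div_le_one hs).2 hts; linarith
  have hb : (0:ℝ) ≤ t/s := by positivity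
  have hab : (1 - t/s) + t/s = 1 := by ring
  have h := (hconv ζ).2 (Set.mem_univ (0:ℝ)) (Set.mem_univ s) ha hb hab
  have hcomb : (1 - t/s) • (0:ℝ) + (t/s) • s = t := by
    rw [smul_eq_mul, smul_eq_mul, mul_zero, zero_add, div_mul_cancel₀ t hs.ne']
  rw [hcomb] at h
  simp only [smul_eq_mul, zero_smul] at h ⊢
  have hu : 0 < t / s := by positivity
  have key : f (t • ζ) - f 0 ≤ (t/s) * (f (s • ζ) - f 0) := by nlinarith
  have : (s/t) * (f (t • ζ) - f 0) ≤ f (s • ζ) - f 0 := by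
    rw [div_mul_eq_mul_div, div_le_iff₀ ht]
    have := mul_le_mul_of_nonneg_left key (le_of_lt hs)
    calc s * (f (t • ζ) - f 0) ≤ s * ((t/s) * (f (s • ζ) - f 0)) := this
      _ = (f (s • ζ) - f 0) * t := by field_simp
  linarith

/-- Abstract convex-analysis fact used in the proof of Theorem 5.1: a
continuous function on a finite-dimensional real normed vector space which is convex along
every ray through the origin and increases above `f 0` along every nonzero direction is
coercive (`f x → +∞` as `‖x‖ → +∞`) and attains a global minimum. -/
theorem coercive_min_of_ray_convex (E : Type*) [NormedAddCommGroup E] [NormedSpace ℝ E]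
    [FiniteDimensional ℝ E] (f : E → ℝ) (hc : Continuous f)
    (hconv : ∀ ζ : E, ConvexOn ℝ Set.univ fun t : ℝ => f (t • ζ))
    (hslope : ∀ ζ : E, ζ ≠ 0 → ∃ t : ℝ, 0 < t ∧ f 0 < f (t • ζ)) :
    Filter.Tendsto f (Filter.comap norm Filter.atTop) Filter.atTop ∧
      ∃ x₀ : E, ∀ x : E, f x₀ ≤ f x := by
  by_cases hE : ∀ x : E, x = 0
  · constructor
    · have hbot : Filter.comap (norm : E → ℝ) Filter.atTop = ⊥ := by
        rw [Filter.comap_eq_bot_iff_compl_range]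
        refine Filter.mem_of_superset (Filter.Ici_mem_atTop 1) ?_
        intro r hr ⟨x, hx⟩
        rw [hE x, norm_zero] at hx
        simp at hr hx
        linarith
      rw [hbot]; exact Filter.tendsto_bot
    · exact ⟨0, fun x => by rw [hE x]⟩
  push_neg at hE
  obtain ⟨ζ0, hζ0⟩ := hE
  -- the unit sphere
  set S : Set E := Metric.sphere (0:E) 1 with hS
  have hScompact : IsCompact S := isCompact_sphere 0 1
  have hSne : S.Nonempty := ⟨‖ζ0‖⁻¹ • ζ0, by
    simp [hS, norm_smul, norm_ne_zero_iff.2 hζ0, inv_mul_cancel₀ (norm_ne_zero_iff.2 hζ0)]⟩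
  -- choose times along each direction
  have hchoice : ∀ i : S, ∃ t : ℝ, 0 < t ∧ f 0 < f (t • (i:E)) := by
    intro i
    apply hslope
    intro h
    have hn : ‖(i:E)‖ = 1 := mem_sphere_zero_iff_norm.1 i.2
    rw [h, norm_zero] at hn
    norm_num at hn
  choose t ht hft using hchoice
  set ε : S → ℝ := fun i => (f (t i • (i:E)) - f 0) / 2 with hε
  have hεpos : ∀ i, 0 < ε i := fun i => by
    have := hft i; simp only [hε]; linarith
  set U : S → Set E := fun i => {x | f 0 + ε i < f (t i • x)} with hU
  have hUopen : ∀ i, IsOpen (U i) :=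
    fun i => isOpen_lt continuous_const (hc.comp (continuous_const_smul (t i)))
  have hcover : S ⊆ ⋃ i, U i := by
    intro x hx
    exact Set.mem_iUnion.2 ⟨⟨x, hx⟩, by simp only [hU, Set.mem_setOf_eq]; have := hft ⟨x, hx⟩; have := hεpos ⟨x, hx⟩; simp only [hε] at *; linarith⟩
  obtain ⟨sf, hsf⟩ := hScompact.elim_finite_subcover U hUopen hcover
  have hsfne : sf.Nonempty := by
    obtain ⟨x, hx⟩ := hSne
    obtain ⟨i, hi, _⟩ := Set.mem_iUnion₂.1 (hsf hx)
    exact ⟨i, hi⟩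
  set T : ℝ := sf.sup' hsfne t with hT
  set δ : ℝ := sf.inf' hsfne (fun i => ε i / t i) with hδ
  have hTpos : 0 < T := by
    obtain ⟨i, hi⟩ := hsfne
    exact lt_of_lt_of_le (ht i) (Finset.le_sup' t hi)
  have hδpos : 0 < δ := by
    rw [hδ, Finset.lt_inf'_iff]
    intro i hi
    exact div_pos (hεpos i) (ht i)
  -- main lower bound
  have hbound : ∀ x : E, T ≤ ‖x‖ → f 0 + δ * ‖x‖ ≤ f x := by
    intro x hx
    have hxpos : 0 < ‖x‖ := lt_of_lt_of_le hTpos hx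
    have hxne : x ≠ 0 := norm_pos_iff.1 hxpos
    set ζ : E := ‖x‖⁻¹ • x with hζ
    have hζS : ζ ∈ S := by
      simp [hS, hζ, norm_smul, abs_of_pos (inv_pos.2 hxpos),
        inv_mul_cancel₀ (ne_of_gt hxpos)]
    obtain ⟨i, hi, hiU⟩ := Set.mem_iUnion₂.1 (hsf hζS)
    have hits : t i ≤ ‖x‖ := le_trans (Finset.le_sup' t hi) hx
    have hslopei := ray_slope f hconv ζ (ht i) hits
    have hxζ : ‖x‖ • ζ = x := by
      rw [hζ, smul_smul, mul_inv_cancel₀ (ne_of_gt hxpos), one_smul]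
    rw [hxζ] at hslopei
    have hiU' : f 0 + ε i < f (t i • ζ) := hiU
    have hδle : δ ≤ ε i / t i := Finset.inf'_le _ hi
    have h1 : δ * ‖x‖ ≤ (ε i / t i) * ‖x‖ :=
      mul_le_mul_of_nonneg_right hδle (le_of_lt hxpos)
    have h2 : (ε i / t i) * ‖x‖ = (‖x‖ / t i) * ε i := by ring
    have h3 : (‖x‖ / t i) * ε i ≤ (‖x‖ / t i) * (f (t i • ζ) - f 0) := by
      apply mul_le_mul_of_nonneg_left (by linarith) (div_nonneg hxpos.le (ht i).le)
    linarith
  constructor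
  · rw [Filter.tendsto_atTop]
    intro b
    rw [Filter.eventually_comap]
    filter_upwards [Filter.eventually_ge_atTop (max T ((b - f 0) / δ))] with r hr x hx
    have hrT : T ≤ r := le_trans (le_max_left _ _) hr
    have hrb : (b - f 0) / δ ≤ r := le_trans (le_max_right _ _) hr
    have := hbound x (by rw [hx]; exact hrT)
    have hb : b - f 0 ≤ δ * r := by
      rw [div_le_iff₀ hδpos] at hrb; linarith
    rw [hx] at this
    linarith
  · have hball : IsCompact (Metric.closedBall (0:E) T) := isCompact_closedBall 0 T
    have hballne : (Metric.closedBall (0:E) T).Nonempty :=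
      ⟨0, Metric.mem_closedBall_self (le_of_lt hTpos)⟩
    obtain ⟨x₀, hx₀mem, hx₀min⟩ := hball.exists_isMinOn hballne hc.continuousOn
    refine ⟨x₀, fun x => ?_⟩
    by_cases hxT : ‖x‖ ≤ T
    · exact hx₀min (by simpa [Metric.mem_closedBall, dist_eq_norm] using hxT)
    · push_neg at hxT
      have h1 := hbound x (le_of_lt hxT)
      have h2 : f x₀ ≤ f 0 :=
        hx₀min (Metric.mem_closedBall_self (le_of_lt hTpos))
      nlinarith [mul_pos hδpos (lt_trans hTpos hxT)]
end
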